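/- arXiv:2101.07250 — 2 statements merged into one kernel-verified Lean document; each statement's English description precedes it below -/
import Mathlib

section
/- For thresholds k₁ ≤ … ≤ k_r with N ≥ k_r + 1, the winning weight satisfies the recurrence W(N, k₁,…,k_r) = θ · P_{N−1} · W(N−1, k₁,…,k_r) + T_{≤r−1}(N−1, k₁,…,k_r). -/
open Finset

/-- Number of inversions (Kendall tau statistic) of a permutation. -/
def inversions {N : ℕ} (π : Equiv.Perm (Fin N)) : ℕ :=
  (Finset.univ.filter (fun x : Fin N × Fin N => x.1 < x.2 ∧ π x.2 < π x.1)).card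

/-- `P_k(θ) = 1 + θ + … + θ^(k-1)`. -/
def mallowsP (θ : ℝ) (k : ℕ) : ℝ := ∑ i ∈ Finset.range k, θ ^ i

/-- `(P_k)! = P_k · P_(k-1) · … · P_1`. -/
def mallowsPFact (θ : ℝ) (k : ℕ) : ℝ := ∏ j ∈ Finset.range k, mallowsP θ (j + 1)

/-- Positions (0-indexed) selected by the multi-threshold strategy: for each
threshold `k` in the list, the next selection is at the first position `p` with
`p ≥ k` (i.e. the first `k` candidates are rejected), `p ≥ lo` (after the previous
selection), and `p` a left-to-right maximum. -/
def selList {N : ℕ} (π : Equiv.Perm (Fin N)) : List ℕ → ℕ → List (Fin N)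
  | [], _ => []
  | k :: ks, lo =>
    let s : Finset (Fin N) := Finset.univ.filter
      (fun p => max k lo ≤ (p : ℕ) ∧ ∀ q : Fin N, q < p → π q < π p)
    if h : s.Nonempty then s.min' h :: selList π ks ((s.min' h : ℕ) + 1) else []

/-- The strategy wins on `π` if the position holding the largest value is selected. -/
def winnable {N : ℕ} (π : Equiv.Perm (Fin N)) (ks : List ℕ) : Prop :=
  ∃ p ∈ selList π ks 0, ∀ q : Fin N, π q ≤ π p

instance {N : ℕ} (π : Equiv.Perm (Fin N)) (ks : List ℕ) : Decidable (winnable π ks) :=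
  inferInstanceAs (Decidable (∃ p ∈ selList π ks 0, ∀ q : Fin N, π q ≤ π p))

/-- `W(N, k₁, …, k_s) = Σ_(winnable π ∈ S_N) θ^(c(π))`. -/
def winW (θ : ℝ) (N : ℕ) (ks : List ℕ) : ℝ :=
  ∑ π : Equiv.Perm (Fin N), if winnable π ks then θ ^ inversions π else 0

/-- `T_{≤j}(m, k₁, …, k_r)`: weight of permutations of `S_m` on which the strategy
makes at most `j` selections (with `j : ℤ`, so `T_{≤-1} = 0`). -/
def Tle (θ : ℝ) (m : ℕ) (ks : List ℕ) (j : ℤ) : ℝ :=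
  ∑ π : Equiv.Perm (Fin m),
    if ((selList π ks 0).length : ℤ) ≤ j then θ ^ inversions π else 0

/-- `T_j(m, k₁, …, k_r)`: weight of permutations of `S_m` on which the strategy
makes exactly `j` selections. -/
def Texact (θ : ℝ) (m : ℕ) (ks : List ℕ) (j : ℕ) : ℝ :=
  ∑ π : Equiv.Perm (Fin m),
    if (selList π ks 0).length = j then θ ^ inversions π else 0

/-!
Every `π ∈ S_{N}` arises uniquely from its value `v = π(N)` at the last position and the
pattern `σ ∈ S_{N-1}` of its first `N - 1` values, and then `c(π) = c(σ) + (N - v)`.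
The last position is a left-to-right maximum only when `v = N`. If `v < N`, the strategy makes
the same selections on `π` as on `σ`, and it wins on `π` exactly when it wins on `σ`; summing
over the `N - 1` such `v` gives the factor `θ · P_{N-1}`. If `v = N`, then since `k_r < N` the
last position is past every rejection window, so it is accepted exactly when the strategy made
fewer than `r` selections on `σ`; these `σ` give the term `T_{≤r-1}`.
-/

section SnocPerm

variable {n : ℕ}

def snocPerm (v : Fin (n + 1)) (σ : Equiv.Perm (Fin n)) : Equiv.Perm (Fin (n + 1)) :=
  finSuccEquivLast.trans ((Equiv.optionCongr σ).trans (finSuccEquiv' v).symm)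

@[simp] lemma snocPerm_castSucc (v : Fin (n + 1)) (σ : Equiv.Perm (Fin n)) (i : Fin n) :
    snocPerm v σ (Fin.castSucc i) = v.succAbove (σ i) := by
  simp [snocPerm]

@[simp] lemma snocPerm_last (v : Fin (n + 1)) (σ : Equiv.Perm (Fin n)) :
    snocPerm v σ (Fin.last n) = v := by
  simp [snocPerm]

lemma snocPerm_bijective :
    Function.Bijective (fun p : Equiv.Perm (Fin n) × Fin (n + 1) => snocPerm p.2 p.1) := by
  rw [Fintype.bijective_iff_injective_and_card]
  refine ⟨fun ⟨σ, v⟩ ⟨τ, w⟩ h => ?_,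
    by simp [Fintype.card_perm, Nat.factorial_succ, mul_comm]⟩
  obtain rfl : v = w := by simpa using congr($h (Fin.last n))
  exact Prod.ext (Equiv.ext fun i => by simpa using congr($h (Fin.castSucc i))) rfl

lemma inversions_eq_sum {N : ℕ} (π : Equiv.Perm (Fin N)) :
    inversions π = ∑ x, ∑ y, if x < y ∧ π y < π x then 1 else 0 := by
  rw [inversions, card_filter, ← Fintype.sum_prod_type']

lemma sum_ite_le_castSucc (v : Fin (n + 1)) :
    ∑ i : Fin n, (if v ≤ Fin.castSucc i then 1 else 0) = n - v := by
  have h := Fin.sum_univ_castSucc (fun j : Fin (n + 1) => if v ≤ j then 1 else 0)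
  rw [← card_filter, ← card_filter, filter_le_eq_Ici, Fin.card_Ici] at h
  simp only [Fin.le_last, if_true] at h
  rw [← card_filter]
  omega

lemma inversions_snocPerm (v : Fin (n + 1)) (σ : Equiv.Perm (Fin n)) :
    inversions (snocPerm v σ) = inversions σ + (n - v) := by
  have hlast : ∑ i, (if v ≤ Fin.castSucc (σ i) then 1 else 0) = n - v :=
    (Equiv.sum_comp σ fun j => if v ≤ Fin.castSucc j then 1 else 0).trans
      (sum_ite_le_castSucc v)
  simp only [inversions_eq_sum, Fin.sum_univ_castSucc, snocPerm_castSucc, snocPerm_last,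
    Fin.castSucc_lt_castSucc_iff, Fin.succAbove_lt_succAbove_iff, Fin.castSucc_lt_last,
    Fin.lt_succAbove_iff_le_castSucc, true_and, lt_irrefl, false_and, if_false,
    Fin.not_lt.2 (Fin.le_last _), sum_const_zero, add_zero, sum_add_distrib, hlast]

end SnocPerm

section Selection

variable {n : ℕ}

def selSet {N : ℕ} (π : Equiv.Perm (Fin N)) (k lo : ℕ) : Finset (Fin N) :=
  univ.filter (fun p => max k lo ≤ (p : ℕ) ∧ ∀ q : Fin N, q < p → π q < π p)

lemma selList_cons {N : ℕ} (π : Equiv.Perm (Fin N)) (k : ℕ) (ks : List ℕ) (lo : ℕ) :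
    selList π (k :: ks) lo = if h : (selSet π k lo).Nonempty
      then (selSet π k lo).min' h :: selList π ks (((selSet π k lo).min' h : ℕ) + 1)
      else [] := rfl

lemma mem_selSet {N : ℕ} {π : Equiv.Perm (Fin N)} {k lo : ℕ} {p : Fin N} :
    p ∈ selSet π k lo ↔ max k lo ≤ (p : ℕ) ∧ ∀ q, q < p → π q < π p := by
  simp [selSet]

lemma selList_eq_nil_of_le {N : ℕ} (π : Equiv.Perm (Fin N)) :
    ∀ (ks : List ℕ) {lo : ℕ}, N ≤ lo → selList π ks lo = []
  | [], _, _ => rfl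
  | k :: ks, lo, h => dif_neg fun ⟨p, hp⟩ => by
    have := (mem_selSet.1 hp).1
    omega

lemma isRecord_snocPerm_castSucc_iff {v : Fin (n + 1)} {σ : Equiv.Perm (Fin n)} {p : Fin n} :
    (∀ q, q < Fin.castSucc p → snocPerm v σ q < snocPerm v σ (Fin.castSucc p)) ↔
      ∀ q, q < p → σ q < σ p := by
  refine ⟨fun h q hq => ?_, fun h q hq => ?_⟩
  · simpa using h (Fin.castSucc q) (Fin.castSucc_lt_castSucc_iff.2 hq)
  · obtain ⟨q, rfl⟩ := Fin.exists_castSucc_eq.2 (hq.trans (Fin.castSucc_lt_last p)).ne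
    simpa using h q (Fin.castSucc_lt_castSucc_iff.1 hq)

lemma isRecord_snocPerm_last_iff {v : Fin (n + 1)} {σ : Equiv.Perm (Fin n)} :
    (∀ q, q < Fin.last n → snocPerm v σ q < snocPerm v σ (Fin.last n)) ↔
      v = Fin.last n := by
  refine ⟨fun h => ?_, fun hv q hq => ?_⟩
  · by_contra hv
    have := h (Fin.castSucc (σ.symm (v.castPred hv))) (Fin.castSucc_lt_last _)
    simp [Fin.succAbove_castPred_self, Fin.lt_def] at this
  · obtain ⟨q, rfl⟩ := Fin.exists_castSucc_eq.2 hq.ne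
    simp [hv]

lemma castSucc_mem_selSet_snocPerm {v : Fin (n + 1)} {σ : Equiv.Perm (Fin n)} {k lo : ℕ}
    {p : Fin n} : Fin.castSucc p ∈ selSet (snocPerm v σ) k lo ↔ p ∈ selSet σ k lo := by
  simp only [mem_selSet, Fin.val_castSucc, isRecord_snocPerm_castSucc_iff]

lemma last_mem_selSet_snocPerm {v : Fin (n + 1)} {σ : Equiv.Perm (Fin n)} {k lo : ℕ} :
    Fin.last n ∈ selSet (snocPerm v σ) k lo ↔ max k lo ≤ n ∧ v = Fin.last n := by
  simp only [mem_selSet, Fin.val_last, isRecord_snocPerm_last_iff]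

lemma min'_eq_castSucc_min' {s : Finset (Fin n)} {t : Finset (Fin (n + 1))}
    (h : ∀ p, Fin.castSucc p ∈ t ↔ p ∈ s) (hs : s.Nonempty) (ht : t.Nonempty) :
    t.min' ht = Fin.castSucc (s.min' hs) := by
  refine le_antisymm (min'_le _ _ ((h _).2 (min'_mem s hs))) (le_min' _ _ _ fun y hy => ?_)
  induction y using Fin.lastCases with
  | last => exact (Fin.castSucc_lt_last _).le
  | cast q => exact Fin.castSucc_le_castSucc_iff.2 (min'_le s q ((h q).1 hy))

lemma selList_snocPerm (v : Fin (n + 1)) (σ : Equiv.Perm (Fin n)) :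
    ∀ (ks : List ℕ) {lo : ℕ}, (∀ k ∈ ks, k ≤ n) → lo ≤ n →
      selList (snocPerm v σ) ks lo = (selList σ ks lo).map Fin.castSucc ++
        if v = Fin.last n ∧ (selList σ ks lo).length < ks.length then [Fin.last n] else []
  | [], _, _, _ => by simp [selList]
  | k :: ks, lo, hks, hlo => by
    have hk := hks k List.mem_cons_self
    rw [selList_cons, selList_cons σ]
    by_cases hs : (selSet σ k lo).Nonempty
    · have ht : (selSet (snocPerm v σ) k lo).Nonempty :=
        ⟨_, castSucc_mem_selSet_snocPerm.2 (min'_mem _ hs)⟩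
      rw [dif_pos ht, dif_pos hs,
        min'_eq_castSucc_min' (fun _ => castSucc_mem_selSet_snocPerm) hs ht, Fin.val_castSucc,
        selList_snocPerm v σ ks (fun k hk => hks k (List.mem_cons_of_mem _ hk))
          ((selSet σ k lo).min' hs).isLt]
      simp
    · have hσ : selSet σ k lo = ∅ := not_nonempty_iff_eq_empty.1 hs
      have hsel : selSet (snocPerm v σ) k lo = if v = Fin.last n then {Fin.last n} else ∅ := by
        ext p
        induction p using Fin.lastCases <;>
          split_ifs <;> simp_all [castSucc_mem_selSet_snocPerm, last_mem_selSet_snocPerm]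
      split_ifs at hsel with hv
      · subst hv
        simp only [hsel, dif_pos (singleton_nonempty _), dif_neg hs, min'_singleton, Fin.val_last,
          selList_eq_nil_of_le _ _ le_rfl]
        simp
      · simp only [hsel, dif_neg Finset.not_nonempty_empty, dif_neg hs]
        simp [hv]

end Selection

section Winning

variable {n : ℕ}

lemma forall_apply_le_iff_eq_last (π : Equiv.Perm (Fin (n + 1))) (p : Fin (n + 1)) :
    (∀ q, π q ≤ π p) ↔ π p = Fin.last n :=
  ⟨fun h => le_antisymm (Fin.le_last _) (by simpa using h (π.symm (Fin.last n))),
    fun h q => h ▸ Fin.le_last _⟩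

lemma forall_snocPerm_le_castSucc_iff {v : Fin (n + 1)} (hv : v ≠ Fin.last n)
    (σ : Equiv.Perm (Fin n)) (p : Fin n) :
    (∀ q, snocPerm v σ q ≤ snocPerm v σ (Fin.castSucc p)) ↔ ∀ q, σ q ≤ σ p := by
  refine ⟨fun h q => by simpa using h (Fin.castSucc q), fun h q => ?_⟩
  induction q using Fin.lastCases with
  | last =>
    have hvp : v.castPred hv ≤ σ p := by simpa using h (σ.symm (v.castPred hv))
    simpa using
      ((Fin.lt_succAbove_iff_le_castSucc v (σ p)).2 ((Fin.castPred_le_iff hv).1 hvp)).le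
  | cast q => simpa using h q

lemma winnable_snocPerm_castSucc (i : Fin n) (σ : Equiv.Perm (Fin n)) (ks : List ℕ)
    (hks : ∀ k ∈ ks, k ≤ n) :
    winnable (snocPerm (Fin.castSucc i) σ) ks ↔ winnable σ ks := by
  have hi : Fin.castSucc i ≠ Fin.last n := (Fin.castSucc_lt_last i).ne
  simp [winnable, selList_snocPerm _ σ ks hks (Nat.zero_le n), hi,
    forall_snocPerm_le_castSucc_iff hi, -snocPerm_castSucc]

lemma winnable_snocPerm_last (σ : Equiv.Perm (Fin n)) (ks : List ℕ)
    (hks : ∀ k ∈ ks, k ≤ n) :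
    winnable (snocPerm (Fin.last n) σ) ks ↔ (selList σ ks 0).length < ks.length := by
  have hmax : ∀ p, snocPerm (Fin.last n) σ p = Fin.last n ↔ p = Fin.last n := fun p =>
    (snocPerm _ σ).injective.eq_iff' (snocPerm_last _ σ)
  simp [winnable, forall_apply_le_iff_eq_last, hmax,
    selList_snocPerm _ σ ks hks (Nat.zero_le n), Fin.castSucc_ne_last]

end Winning

lemma sum_pow_sub_eq_mul_mallowsP (θ : ℝ) (n : ℕ) :
    ∑ i : Fin n, θ ^ (n - (i : ℕ)) = θ * mallowsP θ n := by
  rw [Fin.sum_univ_eq_sum_range (fun j => θ ^ (n - j)), ← sum_range_reflect, mallowsP, mul_sum]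
  refine sum_congr rfl fun j hj => ?_
  rw [show n - (n - 1 - j) = j + 1 by simp at hj; omega, pow_succ']

lemma sum_snocPerm_winning_weight (θ : ℝ) {n : ℕ} (σ : Equiv.Perm (Fin n)) (ks : List ℕ)
    (hks : ∀ k ∈ ks, k ≤ n) :
    ∑ v : Fin (n + 1),
        (if winnable (snocPerm v σ) ks then θ ^ inversions (snocPerm v σ) else 0) =
      (if winnable σ ks then θ ^ inversions σ else 0) * (θ * mallowsP θ n) +
        if ((selList σ ks 0).length : ℤ) ≤ ks.length - 1 then θ ^ inversions σ else 0 := by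
  have hlen : (selList σ ks 0).length < ks.length ↔
      ((selList σ ks 0).length : ℤ) ≤ ks.length - 1 := by omega
  rw [Fin.sum_univ_castSucc, ← sum_pow_sub_eq_mul_mallowsP, mul_sum]
  simp only [winnable_snocPerm_castSucc _ σ ks hks, winnable_snocPerm_last σ ks hks, hlen,
    inversions_snocPerm, Fin.val_castSucc, Fin.val_last, Nat.sub_self, add_zero, pow_add]
  congr 1
  refine sum_congr rfl fun i _ => ?_
  split_ifs <;> simp

theorem stmt7 (θ : ℝ) (ks : List ℕ) (hne : ks ≠ []) (hsort : ks.Pairwise (· ≤ ·))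
    (N : ℕ) (hN : ks.getLast hne + 1 ≤ N) :
    winW θ N ks = θ * mallowsP θ (N - 1) * winW θ (N - 1) ks +
      Tle θ (N - 1) ks ((ks.length : ℤ) - 1) := by
  obtain ⟨n, rfl⟩ : ∃ n, N = n + 1 := ⟨N - 1, by omega⟩
  have hks : ∀ k ∈ ks, k ≤ n := fun k hk =>
    Nat.le_of_lt_succ ((hsort.rel_getLast_of_rel_getLast_getLast hk le_rfl).trans_lt hN)
  rw [Nat.add_sub_cancel, winW, ← snocPerm_bijective.sum_comp, Fintype.sum_prod_type,
    sum_congr rfl fun σ _ => sum_snocPerm_winning_weight θ σ ks hks, sum_add_distrib,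
    ← sum_mul, winW, Tle]
  ring
end

section
/- With k₁ = 0 (accept the first candidate as the first selection), the winning weight satisfies W(N, 0, k₂,…,k_s) = θ^{N−1} · (P_{N−1})! + W(N, k₂,…,k_s). -/
/-! With `k₁ = 0` position `0` is always selected, and as the remaining thresholds are `≥ 1`
the later selections are exactly those of the `(k₂, …, k_s)`-strategy, which never selects
position `0`. Hence `π` is winnable iff `π 0 = N - 1` or `π` is `(k₂, …, k_s)`-winnable, and the
two cases are exclusive. The weight of `{π | π 0 = N - 1}` comes from the Mallows insertion
bijection `(p, σ) ↦ σ` with the maximum inserted at position `p`, which adds `N - 1 - p`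
inversions; the same bijection gives `∑_{σ ∈ S_n} θ^{inv σ} = (P_n)!`. -/

open Finset

open Equiv

section InsertMax

variable {n : ℕ}

def insertMax (p : Fin (n + 1)) (σ : Perm (Fin n)) : Perm (Fin (n + 1)) :=
  (finSuccEquiv' p).trans (σ.optionCongr.trans (finSuccEquiv' (Fin.last n)).symm)

@[simp]
lemma insertMax_apply_self (p : Fin (n + 1)) (σ : Perm (Fin n)) :
    insertMax p σ p = Fin.last n := by
  simp [insertMax]

@[simp]
lemma insertMax_apply_succAbove (p : Fin (n + 1)) (σ : Perm (Fin n)) (i : Fin n) :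
    insertMax p σ (p.succAbove i) = (σ i).castSucc := by
  simp [insertMax, Fin.succAbove_last]

lemma insertMax_apply_eq_last_iff (p q : Fin (n + 1)) (σ : Perm (Fin n)) :
    insertMax p σ q = Fin.last n ↔ q = p := by
  rw [← insertMax_apply_self p σ, (insertMax p σ).injective.eq_iff]

def removeMax (p : Fin (n + 1)) (π : Perm (Fin (n + 1))) : Perm (Fin n) :=
  removeNone ((finSuccEquiv' p).symm.trans (π.trans (finSuccEquiv' (Fin.last n))))

lemma removeMax_insertMax (p : Fin (n + 1)) (σ : Perm (Fin n)) :
    removeMax p (insertMax p σ) = σ := by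
  have : (finSuccEquiv' p).symm.trans ((insertMax p σ).trans (finSuccEquiv' (Fin.last n)))
      = σ.optionCongr := by
    ext x
    simp [insertMax]
  rw [removeMax, this, removeNone_optionCongr]

lemma insertMax_removeMax (p : Fin (n + 1)) (π : Perm (Fin (n + 1)))
    (h : π p = Fin.last n) : insertMax p (removeMax p π) = π := by
  set e : Perm (Option (Fin n)) :=
    (finSuccEquiv' p).symm.trans (π.trans (finSuccEquiv' (Fin.last n)))
  have he : e none = none := by simp [e, h]
  have : (removeNone e).optionCongr = e := by
    rw [map_equiv_removeNone, he, swap_self, ← Perm.one_def, one_mul]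
  rw [insertMax, removeMax, this]
  ext x
  simp [e]

def insertMaxEquiv : Fin (n + 1) × Perm (Fin n) ≃ Perm (Fin (n + 1)) where
  toFun x := insertMax x.1 x.2
  invFun π := (π.symm (Fin.last n), removeMax (π.symm (Fin.last n)) π)
  left_inv := fun ⟨p, σ⟩ => by
    have hp : (insertMax p σ).symm (Fin.last n) = p := by
      rw [symm_apply_eq, insertMax_apply_self]
    simp only [hp, removeMax_insertMax]
  right_inv π := insertMax_removeMax _ π (π.apply_symm_apply _)

lemma inversions_insertMax (p : Fin (n + 1)) (σ : Perm (Fin n)) :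
    inversions (insertMax p σ) = (n - p) + inversions σ := by
  -- No inversion ends at the position of the maximum; the others start there or avoid it.
  have hsplit : univ.filter (fun x : Fin (n + 1) × Fin (n + 1) =>
        x.1 < x.2 ∧ insertMax p σ x.2 < insertMax p σ x.1) =
      (Ioi p).map ⟨(p, ·), Prod.mk_right_injective p⟩ ∪
        (univ.filter (fun x : Fin n × Fin n => x.1 < x.2 ∧ σ x.2 < σ x.1)).map
          (p.succAboveEmb.prodMap p.succAboveEmb) := by
    ext ⟨x, y⟩
    induction x using p.succAboveCases <;> induction y using p.succAboveCases <;>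
      simp [Fin.lt_last_iff_ne_last, Fin.succAbove_ne, Fin.ne_succAbove, Fin.le_last]
  have hdisj : Disjoint ((Ioi p).map ⟨(p, ·), Prod.mk_right_injective p⟩)
      ((univ.filter (fun x : Fin n × Fin n => x.1 < x.2 ∧ σ x.2 < σ x.1)).map
          (p.succAboveEmb.prodMap p.succAboveEmb)) := by
    simp [disjoint_left, Fin.succAbove_ne]
  rw [inversions, hsplit, card_union_of_disjoint hdisj, card_map, card_map, Fin.card_Ioi,
    inversions, Nat.add_sub_cancel]

end InsertMax

lemma sum_pow_inversions_succ (θ : ℝ) (n : ℕ) :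
    ∑ π : Perm (Fin (n + 1)), θ ^ inversions π =
      mallowsP θ (n + 1) * ∑ σ : Perm (Fin n), θ ^ inversions σ := by
  have hP : ∑ p : Fin (n + 1), θ ^ (n - (p : ℕ)) = mallowsP θ (n + 1) := by
    rw [Fin.sum_univ_eq_sum_range (fun i => θ ^ (n - i)), mallowsP]
    simpa using sum_range_reflect (θ ^ ·) (n + 1)
  rw [← insertMaxEquiv.sum_comp, Fintype.sum_prod_type, ← hP, sum_mul]
  simp [insertMaxEquiv, inversions_insertMax, pow_add, mul_sum]

lemma sum_pow_inversions (θ : ℝ) (n : ℕ) :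
    ∑ σ : Perm (Fin n), θ ^ inversions σ = mallowsPFact θ n := by
  induction n with
  | zero => simp [inversions, mallowsPFact]
  | succ n ih =>
    rw [sum_pow_inversions_succ, ih, mallowsPFact, mallowsPFact, prod_range_succ, mul_comm]

lemma sum_pow_inversions_of_apply_zero_eq_last (θ : ℝ) (n : ℕ) :
    ∑ π : Perm (Fin (n + 1)), (if π 0 = Fin.last n then θ ^ inversions π else 0) =
      θ ^ n * mallowsPFact θ n := by
  rw [← insertMaxEquiv.sum_comp, Fintype.sum_prod_type, ← sum_pow_inversions, mul_sum]
  simp [insertMaxEquiv, insertMax_apply_eq_last_iff, inversions_insertMax, pow_add]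

section Selection

variable {N : ℕ}

lemma le_of_mem_selList {π : Perm (Fin N)} {ks : List ℕ} {lo : ℕ} {p : Fin N}
    (hp : p ∈ selList π ks lo) : lo ≤ p := by
  induction ks generalizing lo with
  | nil => simp [selList] at hp
  | cons k ks ih =>
    rw [selList] at hp
    split_ifs at hp with hne
    · have hmin := (mem_filter.mp (min'_mem _ hne)).2.1
      rcases List.mem_cons.mp hp with rfl | hp
      · exact le_of_max_le_right hmin
      · have := ih hp
        omega
    · simp at hp

lemma selList_one (π : Perm (Fin N)) {ks : List ℕ} (hpos : ∀ k ∈ ks, 1 ≤ k) :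
    selList π ks 1 = selList π ks 0 := by
  cases ks with
  | nil => rfl
  | cons k ks =>
    have : max k 1 = max k 0 := by simp [hpos k List.mem_cons_self]
    simp only [selList, this]

lemma selList_zero_cons {n : ℕ} (π : Perm (Fin (n + 1))) (ks : List ℕ) :
    selList π (0 :: ks) 0 = 0 :: selList π ks 1 := by
  have h0 : (0 : Fin (n + 1)) ∈ univ.filter
      (fun p : Fin (n + 1) => max 0 0 ≤ (p : ℕ) ∧ ∀ q, q < p → π q < π p) := by
    simp
  rw [selList, dif_pos ⟨0, h0⟩, le_antisymm (min'_le _ _ h0) (Fin.zero_le _)]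
  rfl

lemma forall_apply_le_iff {n : ℕ} (π : Perm (Fin (n + 1))) (p : Fin (n + 1)) :
    (∀ q, π q ≤ π p) ↔ π p = Fin.last n :=
  ⟨fun h => (Fin.le_last _).antisymm (π.apply_symm_apply (Fin.last n) ▸ h _),
    fun h _ => h ▸ Fin.le_last _⟩

lemma winnable_zero_cons_iff {n : ℕ} (π : Perm (Fin (n + 1))) {ks : List ℕ}
    (hpos : ∀ k ∈ ks, 1 ≤ k) :
    winnable π (0 :: ks) ↔ π 0 = Fin.last n ∨ winnable π ks := by
  simp only [winnable, selList_zero_cons, selList_one π hpos, List.mem_cons,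
    exists_eq_or_imp, forall_apply_le_iff]

lemma not_winnable_of_apply_zero_eq_last {n : ℕ} {π : Perm (Fin (n + 1))} {ks : List ℕ}
    (hpos : ∀ k ∈ ks, 1 ≤ k) (h : π 0 = Fin.last n) : ¬ winnable π ks := by
  rintro ⟨p, hp, hmax⟩
  rw [← selList_one π hpos] at hp
  have hp0 : p = 0 := π.injective (((forall_apply_le_iff π p).mp hmax).trans h.symm)
  have := le_of_mem_selList hp
  simp [hp0] at this

end Selection

theorem stmt11_general (θ : ℝ) (N : ℕ) (hN : 1 ≤ N) (ks : List ℕ)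
    (hpos : ∀ x ∈ ks, 1 ≤ x) :
    winW θ N (0 :: ks) = θ ^ (N - 1) * mallowsPFact θ (N - 1) + winW θ N ks := by
  obtain ⟨n, rfl⟩ := Nat.exists_eq_add_of_le' hN
  have hsplit (π : Perm (Fin (n + 1))) :
      (if winnable π (0 :: ks) then θ ^ inversions π else 0) =
        (if π 0 = Fin.last n then θ ^ inversions π else 0) +
          (if winnable π ks then θ ^ inversions π else 0) := by
    by_cases h0 : π 0 = Fin.last n
    · simp [winnable_zero_cons_iff π hpos, h0, not_winnable_of_apply_zero_eq_last hpos h0]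
    · simp [winnable_zero_cons_iff π hpos, h0]
  simp only [winW, hsplit, sum_add_distrib, sum_pow_inversions_of_apply_zero_eq_last,
    Nat.add_sub_cancel]

theorem stmt11 (θ : ℝ) (N : ℕ) (hN : 1 ≤ N) (ks : List ℕ)
    (hsort : ks.Pairwise (· ≤ ·)) (hpos : ∀ x ∈ ks, 1 ≤ x) :
    winW θ N (0 :: ks) = θ ^ (N - 1) * mallowsPFact θ (N - 1) + winW θ N ks :=
  stmt11_general θ N hN ks hpos
end
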